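/- For i = 1, 2 let εᵢ ∈ {1, −1} and xᵢ ∈ ℤ, and let Mᵢ = (0 εᵢ; 1 xᵢ) ∈ GL₂ℤ. Then M₁ and M₂ are conjugate in PGL₂ℤ — i.e., there exists P ∈ GL₂ℤ with P M₁ P⁻¹ = M₂ or P M₁ P⁻¹ = −M₂ — if and only if ε₁ = ε₂ and |x₁| = |x₂|. -/

import Mathlib

/-!
Conjugation preserves determinant and trace, and negating a `2 × 2` matrix keeps its
determinant and negates its trace; as `!![0, ε; 1, x]` has determinant `-ε` and trace `x`, this
forces `ε₁ = ε₂` and `x₁ = ± x₂`. Conversely, conjugation by `diag(1, -1)` turns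
`!![0, ε; 1, x]` into `-!![0, ε; 1, -x]`.
-/

open Matrix

abbrev GL2Z := GL (Fin 2) ℤ

section ConjUpToSign

variable {n R : Type*} [Fintype n] [DecidableEq n] [CommRing R]

lemma det_eq_of_conj_eq_or_eq_neg (hn : Even (Fintype.card n)) {P M N : GL n R}
    (h : P * M * P⁻¹ = N ∨ P * M * P⁻¹ = -N) : (M : Matrix n n R).det = (N : Matrix n n R).det := by
  rw [← det_units_conj P M, ← Units.val_mul, ← Units.val_mul]
  rcases h with h | h
  · rw [h]
  · rw [h, Units.val_neg, det_neg, hn.neg_one_pow, one_mul]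

lemma trace_eq_or_eq_neg_of_conj_eq_or_eq_neg {P M N : GL n R}
    (h : P * M * P⁻¹ = N ∨ P * M * P⁻¹ = -N) :
    (M : Matrix n n R).trace = (N : Matrix n n R).trace ∨
      (M : Matrix n n R).trace = -(N : Matrix n n R).trace := by
  rw [← trace_units_conj P M, ← Units.val_mul, ← Units.val_mul]
  rcases h with h | h
  · exact Or.inl (by rw [h])
  · exact Or.inr (by rw [h, Units.val_neg, trace_neg])

end ConjUpToSign

section Reflection

variable {R : Type*} [CommRing R]

lemma diag_one_neg_one_mul_self :
    (!![1, 0; 0, -1] : Matrix (Fin 2) (Fin 2) R) * !![1, 0; 0, -1] = 1 := by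
  simp [one_fin_two]

def diagOneNegOne : GL (Fin 2) R :=
  ⟨!![1, 0; 0, -1], !![1, 0; 0, -1], diag_one_neg_one_mul_self, diag_one_neg_one_mul_self⟩

lemma diagOneNegOne_inv : (diagOneNegOne⁻¹ : GL (Fin 2) R) = diagOneNegOne := rfl

lemma coe_diagOneNegOne :
    ((diagOneNegOne : GL (Fin 2) R) : Matrix (Fin 2) (Fin 2) R) = !![1, 0; 0, -1] := rfl

lemma diag_one_neg_one_conj_eq_neg (e x : R) :
    !![1, 0; 0, -1] * !![0, e; 1, x] * !![1, 0; 0, -1] = -!![0, e; 1, -x] := by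
  simp

end Reflection

theorem conj_in_PGL2_iff (ε₁ ε₂ x₁ x₂ : ℤ)
    (M₁ M₂ : GL2Z)
    (hM₁ : (M₁ : Matrix (Fin 2) (Fin 2) ℤ) = !![0, ε₁; 1, x₁])
    (hM₂ : (M₂ : Matrix (Fin 2) (Fin 2) ℤ) = !![0, ε₂; 1, x₂]) :
    (∃ P : GL2Z, P * M₁ * P⁻¹ = M₂ ∨ P * M₁ * P⁻¹ = -M₂) ↔
      (ε₁ = ε₂ ∧ |x₁| = |x₂|) := by
  constructor
  · rintro ⟨P, hP⟩
    have hdet := det_eq_of_conj_eq_or_eq_neg (by decide) hP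
    have htr := trace_eq_or_eq_neg_of_conj_eq_or_eq_neg hP
    simp only [hM₁, hM₂, det_fin_two_of, trace_fin_two_of, zero_add] at hdet htr
    exact ⟨by linarith, abs_eq_abs.mpr htr⟩
  · rintro ⟨rfl, hx⟩
    rcases abs_eq_abs.mp hx with rfl | rfl
    · exact ⟨1, Or.inl (Units.ext (by simp [hM₁, hM₂]))⟩
    · refine ⟨diagOneNegOne, Or.inr (Units.ext ?_)⟩
      rw [diagOneNegOne_inv, Units.val_mul, Units.val_mul, Units.val_neg, coe_diagOneNegOne,
        hM₁, hM₂, diag_one_neg_one_conj_eq_neg, neg_neg]
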